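/- (Unbiasedness of the importance-weighted normalizing-constant estimator.) Let d, K ∈ ℕ. Let ν : ℝ^d → [0,∞) be a probability density, let μ : ℝ^d → [0,∞) be integrable with Z := ∫ μ, and let p_0, …, p_{K-1} and q_0, …, q_{K-1} be measurable nonnegative kernels on ℝ^d × ℝ^d such that ∫ p_k(x, y) dy = 1 for all x and ∫ q_k(y, x) dx = 1 for all y. Define the forward path density p(x_{0:K}) := ν(x_0)·∏_{k=0}^{K-1} p_k(x_k, x_{k+1}) and the estimator Ẑ(x_{0:K}) := μ(x_K)·∏_{k=0}^{K-1} q_k(x_{k+1}, x_k) / p(x_{0:K}) (set to 0 where p vanishes). Assume the support condition: for Lebesgue-a.e. (x_0, …, x_K), p(x_{0:K}) = 0 implies μ(x_K)·∏_{k=0}^{K-1} q_k(x_{k+1}, x_k) = 0. Then ∫_{(ℝ^d)^{K+1}} Ẑ(x_{0:K})·p(x_{0:K}) dx_{0:K} = Z, i.e. the estimator Ẑ is unbiased for the normalizing constant under the forward chain. -/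
import Mathlib


open MeasureTheory Finset

private lemma aux_marg {d : ℕ} :
    ∀ (K : ℕ) (μ : EuclideanSpace ℝ (Fin d) → ℝ)
      (q : ℕ → EuclideanSpace ℝ (Fin d) → EuclideanSpace ℝ (Fin d) → ℝ),
      Measurable μ → (∀ k, Measurable (Function.uncurry (q k))) →
      (∀ k < K, ∀ y, ∫⁻ x, ENNReal.ofReal (q k y x) = 1) →
      ∫⁻ x : Fin (K + 1) → EuclideanSpace ℝ (Fin d),
          ENNReal.ofReal (μ (x (Fin.last K))) *
            ∏ k : Fin K, ENNReal.ofReal (q k (x k.succ) (x k.castSucc))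
        = ∫⁻ y, ENNReal.ofReal (μ y) := by
  intro K
  induction K with
  | zero =>
    intro μ q hμm hqm hq1
    simp only [Finset.univ_eq_empty, Finset.prod_empty, mul_one]
    exact (volume_preserving_funUnique (Fin 1) (EuclideanSpace ℝ (Fin d))).lintegral_comp
      (f := fun y => ENNReal.ofReal (μ y)) (hμm.ennreal_ofReal)
  | succ K IH =>
    intro μ q hμm hqm hq1
    have hfm : Measurable (fun yz : (EuclideanSpace ℝ (Fin d)) × (Fin (K + 1) → EuclideanSpace ℝ (Fin d)) =>
      ENNReal.ofReal (μ (yz.2 (Fin.last K))) *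
        (ENNReal.ofReal (q 0 (yz.2 0) yz.1) *
          ∏ k : Fin K, ENNReal.ofReal (q (k + 1) (yz.2 k.succ) (yz.2 k.castSucc)))) := by
      apply Measurable.mul
      · exact (hμm.comp ((measurable_pi_apply (Fin.last K)).comp measurable_snd)).ennreal_ofReal
      apply Measurable.mul
      · apply Measurable.ennreal_ofReal
        exact (hqm 0).comp
          ((((measurable_pi_apply (0 : Fin (K+1))).comp measurable_snd).prodMk
            measurable_fst) : Measurable fun yz : (EuclideanSpace ℝ (Fin d)) × (Fin (K + 1) → EuclideanSpace ℝ (Fin d)) => (yz.2 0, yz.1))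
      · refine Finset.measurable_prod _ fun k _ => Measurable.ennreal_ofReal ?_
        exact (hqm (k + 1)).comp
          (((((measurable_pi_apply k.succ).comp measurable_snd).prodMk
            ((measurable_pi_apply k.castSucc).comp measurable_snd))) : Measurable fun yz : (EuclideanSpace ℝ (Fin d)) × (Fin (K + 1) → EuclideanSpace ℝ (Fin d)) => (yz.2 k.succ, yz.2 k.castSucc))
    have key := (volume_preserving_piFinSuccAbove
      (fun _ : Fin (K + 2) => EuclideanSpace ℝ (Fin d)) 0).lintegral_comp hfm
    have lhs_eq : ∫⁻ x : Fin (K + 2) → EuclideanSpace ℝ (Fin d),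
        ENNReal.ofReal (μ (((MeasurableEquiv.piFinSuccAbove
            (fun _ : Fin (K + 2) => EuclideanSpace ℝ (Fin d)) 0) x).2 (Fin.last K))) *
          (ENNReal.ofReal (q 0 (((MeasurableEquiv.piFinSuccAbove
              (fun _ : Fin (K + 2) => EuclideanSpace ℝ (Fin d)) 0) x).2 0)
              ((MeasurableEquiv.piFinSuccAbove
              (fun _ : Fin (K + 2) => EuclideanSpace ℝ (Fin d)) 0) x).1) *
            ∏ k : Fin K, ENNReal.ofReal (q (k + 1)
              (((MeasurableEquiv.piFinSuccAbove
                (fun _ : Fin (K + 2) => EuclideanSpace ℝ (Fin d)) 0) x).2 k.succ)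
              (((MeasurableEquiv.piFinSuccAbove
                (fun _ : Fin (K + 2) => EuclideanSpace ℝ (Fin d)) 0) x).2 k.castSucc)))
        = ∫⁻ x : Fin (K + 2) → EuclideanSpace ℝ (Fin d),
          ENNReal.ofReal (μ (x (Fin.last (K + 1)))) *
            ∏ k : Fin (K + 1), ENNReal.ofReal (q k (x k.succ) (x k.castSucc)) := by
      apply lintegral_congr
      intro x
      simp only [MeasurableEquiv.piFinSuccAbove_apply, Fin.zero_succAbove, Fin.insertNthEquiv,
        Equiv.coe_fn_symm_mk]
      rw [Fin.prod_univ_succ, ← Fin.succ_last]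
      simp [Fin.removeNth, Fin.zero_succAbove, Fin.val_succ, ← Fin.succ_castSucc]
    rw [lhs_eq] at key
    rw [key, Measure.volume_eq_prod, lintegral_prod_symm _ hfm.aemeasurable]
    have inner : ∀ y : Fin (K + 1) → EuclideanSpace ℝ (Fin d),
        ∫⁻ x0 : EuclideanSpace ℝ (Fin d),
          ENNReal.ofReal (μ (y (Fin.last K))) *
            (ENNReal.ofReal (q 0 (y 0) x0) *
              ∏ k : Fin K, ENNReal.ofReal (q (k + 1) (y k.succ) (y k.castSucc)))
        = ENNReal.ofReal (μ (y (Fin.last K))) *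
            ∏ k : Fin K, ENNReal.ofReal (q (k + 1) (y k.succ) (y k.castSucc)) := by
      intro y
      have hg : Measurable fun x0 => ENNReal.ofReal (q 0 (y 0) x0) :=
        ((hqm 0).comp ((measurable_const.prodMk measurable_id) :
          Measurable fun x0 : EuclideanSpace ℝ (Fin d) => (y 0, x0))).ennreal_ofReal
      calc ∫⁻ x0, ENNReal.ofReal (μ (y (Fin.last K))) *
            (ENNReal.ofReal (q 0 (y 0) x0) *
              ∏ k : Fin K, ENNReal.ofReal (q (k + 1) (y k.succ) (y k.castSucc)))
          = ∫⁻ x0, (ENNReal.ofReal (μ (y (Fin.last K))) *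
              ∏ k : Fin K, ENNReal.ofReal (q (k + 1) (y k.succ) (y k.castSucc))) *
                ENNReal.ofReal (q 0 (y 0) x0) := by
            apply lintegral_congr; intro x0; ring
        _ = (ENNReal.ofReal (μ (y (Fin.last K))) *
              ∏ k : Fin K, ENNReal.ofReal (q (k + 1) (y k.succ) (y k.castSucc))) *
                ∫⁻ x0, ENNReal.ofReal (q 0 (y 0) x0) := lintegral_const_mul _ hg
        _ = _ := by rw [hq1 0 (Nat.succ_pos K) (y 0), mul_one]
    calc ∫⁻ y : Fin (K + 1) → EuclideanSpace ℝ (Fin d), ∫⁻ x0 : EuclideanSpace ℝ (Fin d),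
            ENNReal.ofReal (μ (y (Fin.last K))) *
              (ENNReal.ofReal (q 0 (y 0) x0) *
                ∏ k : Fin K, ENNReal.ofReal (q (k + 1) (y k.succ) (y k.castSucc)))
        = ∫⁻ y : Fin (K + 1) → EuclideanSpace ℝ (Fin d),
            ENNReal.ofReal (μ (y (Fin.last K))) *
              ∏ k : Fin K, ENNReal.ofReal (q (k + 1) (y k.succ) (y k.castSucc)) :=
          lintegral_congr inner
      _ = ∫⁻ y, ENNReal.ofReal (μ y) :=
          IH μ (fun k => q (k + 1)) hμm (fun k => hqm (k + 1))
            (fun k hk y => hq1 (k + 1) (by omega) y)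


/-- Forward path density `p(x_{0:K}) = ν(x₀)·∏ p_k(x_k, x_{k+1})`. -/
noncomputable def pPath {d K : ℕ} (ν : EuclideanSpace ℝ (Fin d) → ℝ)
    (p : ℕ → EuclideanSpace ℝ (Fin d) → EuclideanSpace ℝ (Fin d) → ℝ)
    (x : Fin (K + 1) → EuclideanSpace ℝ (Fin d)) : ℝ :=
  ν (x 0) * ∏ k : Fin K, p k (x k.castSucc) (x k.succ)

/-- Importance-weighted normalizing-constant estimator
`Ẑ(x_{0:K}) = μ(x_K)·∏ q_k(x_{k+1}, x_k) / p(x_{0:K})` (set to `0` where `p` vanishes). -/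
noncomputable def zHat {d K : ℕ} (ν μ : EuclideanSpace ℝ (Fin d) → ℝ)
    (p q : ℕ → EuclideanSpace ℝ (Fin d) → EuclideanSpace ℝ (Fin d) → ℝ)
    (x : Fin (K + 1) → EuclideanSpace ℝ (Fin d)) : ℝ :=
  if pPath ν p x = 0 then 0
  else (μ (x (Fin.last K)) * ∏ k : Fin K, q k (x k.succ) (x k.castSucc)) / pPath ν p x

/-- Unbiasedness of the importance-weighted normalizing-constant estimator:
`∫ Ẑ(x_{0:K})·p(x_{0:K}) dx_{0:K} = Z = ∫ μ`. -/
theorem stmt3 {d K : ℕ}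
    (ν μ : EuclideanSpace ℝ (Fin d) → ℝ)
    (hνm : Measurable ν) (hν0 : ∀ x, 0 ≤ ν x) (hν1 : ∫ x, ν x = 1)
    (hμm : Measurable μ) (hμ0 : ∀ x, 0 ≤ μ x) (hμi : Integrable μ)
    (p q : ℕ → EuclideanSpace ℝ (Fin d) → EuclideanSpace ℝ (Fin d) → ℝ)
    (hpm : ∀ k, Measurable (Function.uncurry (p k)))
    (hqm : ∀ k, Measurable (Function.uncurry (q k)))
    (hp0 : ∀ k x y, 0 ≤ p k x y) (hq0 : ∀ k y x, 0 ≤ q k y x)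
    (hp1 : ∀ k < K, ∀ x, ∫ y, p k x y = 1)
    (hq1 : ∀ k < K, ∀ y, ∫ x, q k y x = 1)
    (hsupp : ∀ᵐ x ∂(volume : Measure (Fin (K + 1) → EuclideanSpace ℝ (Fin d))),
      pPath ν p x = 0 →
        μ (x (Fin.last K)) * ∏ k : Fin K, q k (x k.succ) (x k.castSucc) = 0) :
    ∫ x : Fin (K + 1) → EuclideanSpace ℝ (Fin d), zHat ν μ p q x * pPath ν p x
      = ∫ y, μ y := by
  have hN0 : ∀ x : Fin (K + 1) → EuclideanSpace ℝ (Fin d),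
      0 ≤ μ (x (Fin.last K)) * ∏ k : Fin K, q k (x k.succ) (x k.castSucc) := fun x =>
    mul_nonneg (hμ0 _) (Finset.prod_nonneg fun k _ => hq0 _ _ _)
  have hNm : Measurable (fun x : Fin (K + 1) → EuclideanSpace ℝ (Fin d) =>
      μ (x (Fin.last K)) * ∏ k : Fin K, q k (x k.succ) (x k.castSucc) : _ → ℝ) := by
    apply Measurable.mul
    · exact hμm.comp (measurable_pi_apply (Fin.last K))
    · exact Finset.measurable_prod _ fun k _ =>
        (hqm k).comp
          ((((measurable_pi_apply k.succ)).prodMk (measurable_pi_apply k.castSucc)) :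
            Measurable fun x : Fin (K + 1) → EuclideanSpace ℝ (Fin d) =>
              (x k.succ, x k.castSucc))
  have step1 : ∫ x : Fin (K + 1) → EuclideanSpace ℝ (Fin d),
      zHat ν μ p q x * pPath ν p x
      = ∫ x : Fin (K + 1) → EuclideanSpace ℝ (Fin d),
          μ (x (Fin.last K)) * ∏ k : Fin K, q k (x k.succ) (x k.castSucc) := by
    apply integral_congr_ae
    filter_upwards [hsupp] with x hx
    by_cases h : pPath ν p x = 0
    · simp [zHat, h, hx h]
    · simp only [zHat, if_neg h]
      exact div_mul_cancel₀ _ h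
  have hq1' : ∀ k < K, ∀ y, ∫⁻ x, ENNReal.ofReal (q k y x) = 1 := by
    intro k hk y
    have hm : AEStronglyMeasurable (fun x => q k y x) volume :=
      ((hqm k).comp ((measurable_const.prodMk measurable_id) :
        Measurable fun x : EuclideanSpace ℝ (Fin d) => (y, x))).aestronglyMeasurable
    have := integral_eq_lintegral_of_nonneg_ae
      (Filter.Eventually.of_forall (hq0 k y)) hm
    rw [hq1 k hk y] at this
    exact ((ENNReal.toReal_eq_one_iff _).mp this.symm)
  rw [step1, integral_eq_lintegral_of_nonneg_ae
      (Filter.Eventually.of_forall hN0) hNm.aestronglyMeasurable]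
  have rew : ∫⁻ x : Fin (K + 1) → EuclideanSpace ℝ (Fin d),
      ENNReal.ofReal (μ (x (Fin.last K)) * ∏ k : Fin K, q k (x k.succ) (x k.castSucc))
      = ∫⁻ x : Fin (K + 1) → EuclideanSpace ℝ (Fin d),
          ENNReal.ofReal (μ (x (Fin.last K))) *
            ∏ k : Fin K, ENNReal.ofReal (q k (x k.succ) (x k.castSucc)) := by
    apply lintegral_congr
    intro x
    rw [ENNReal.ofReal_mul (hμ0 _), ENNReal.ofReal_prod_of_nonneg fun k _ => hq0 _ _ _]
  rw [rew, aux_marg K μ q hμm hqm hq1',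
    ← ofReal_integral_eq_lintegral_ofReal hμi (Filter.Eventually.of_forall hμ0),
    ENNReal.toReal_ofReal (integral_nonneg hμ0)]
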